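/- Under the second-order self-bounding assumption, fix w0 ∈ E and set L1(w0) = max{1, ρ0(F(w0)+1), ρ0(F(w0))·ρ0(F(w0)+1), ρ1(F(w0)+1)}. Then for every w ∈ E with F(w) ≤ F(w0) and every u ∈ E with ‖u − w‖ ≤ 1/ρ0(F(w0)+1), one has ‖∇²F(u)‖_op ≤ L1(w0). -/

import Mathlib

/-- `θ(x) = ∫₀ˣ 1/ρ1(v) dv`. -/
noncomputable def sbTheta (ρ1 : ℝ → ℝ) (x : ℝ) : ℝ := ∫ v in (0 : ℝ)..x, 1 / ρ1 v

/-- `ρ0(x) = ρ1(x)·√(2 θ(x))`. -/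
noncomputable def sbRho0 (ρ1 : ℝ → ℝ) (x : ℝ) : ℝ := ρ1 x * Real.sqrt (2 * sbTheta ρ1 x)

/-!
Along a line `h s = F (w + s • v)` leaving `w` downhill, `h'' ≤ M := ρ1 (F w) ‖v‖²` as long as
`h` has not climbed back above `h 0`. Hence `h` stays below the parabola
`h 0 + h' 0 s + M s² / 2` until its vertex, where `F ≥ 0` forces `(h' 0)² ≤ 2 M h 0`; this gives
`‖∇F w‖² ≤ 2 ρ1 (F w) F w ≤ ρ0 (F w)²`, using `θ x ≥ x / ρ1 x`. With this gradient bound,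
`t ↦ F w0 + t` is a barrier for `F` along segments of length `≤ 1 / ρ0 (F w0 + 1)` starting in
the sublevel set, so `F u ≤ F w0 + 1` and `‖∇²F u‖ ≤ ρ1 (F u) ≤ ρ1 (F w0 + 1)`.
-/

open Set

theorem image_le_of_hasDerivAt_le {f f' B B' : ℝ → ℝ} {a b : ℝ}
    (hf : ∀ x, HasDerivAt f (f' x) x) (hB : ∀ x, HasDerivAt B (B' x) x) (ha : f a ≤ B a)
    (bound : ∀ x ∈ Ico a b, f' x ≤ B' x) : ∀ x ∈ Icc a b, f x ≤ B x :=
  fun _ hx => image_le_of_deriv_right_le_deriv_boundary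
    (fun x _ => (hf x).continuousAt.continuousWithinAt) (fun x _ => (hf x).hasDerivWithinAt) ha
    (fun x _ => (hB x).continuousAt.continuousWithinAt) (fun x _ => (hB x).hasDerivWithinAt)
    bound hx

theorem sq_deriv_le_two_mul_of_nonneg {h h' h'' : ℝ → ℝ} {M : ℝ} (hM : 0 < M)
    (hh : ∀ s, HasDerivAt h (h' s) s) (hh' : ∀ s, HasDerivAt h' (h'' s) s)
    (hnn : ∀ s, 0 ≤ h s) (hbd : ∀ s, h s ≤ h 0 → h'' s ≤ M) (h'0 : h' 0 ≤ 0) :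
    h' 0 ^ 2 ≤ 2 * M * h 0 := by
  set T := -h' 0 / M
  have hT : 0 ≤ T := div_nonneg (neg_nonneg.2 h'0) hM.le
  have hMT : h' 0 + M * T = 0 := by rw [mul_div_cancel₀ _ hM.ne']; ring
  have below (x : ℝ) (hx : ∀ t ∈ Ico 0 x, h' t ≤ 0) : ∀ t ∈ Icc 0 x, h t ≤ h 0 :=
    image_le_of_hasDerivAt_le hh (fun _ => hasDerivAt_const _ _) le_rfl hx
  have slope (x : ℝ) (hx : ∀ t ∈ Ico 0 x, h' t ≤ 0) : ∀ t ∈ Icc 0 x, h' t ≤ h' 0 + M * t :=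
    image_le_of_hasDerivAt_le hh'
      (fun t => by simpa using ((hasDerivAt_id t).const_mul M).const_add (h' 0)) (by simp)
      (fun t ht => hbd t (below x hx t (Ico_subset_Icc_self ht)))
  -- `h` decreases until `T`: a first point where `h' ≥ 0` would contradict `slope`.
  have hdecr : ∀ t ∈ Ico 0 T, h' t ≤ 0 := by
    by_contra! hpos
    obtain ⟨s, hs, hs'⟩ := hpos
    have hcont : Continuous h' := continuous_iff_continuousAt.2 fun t => (hh' t).continuousAt
    have hK : IsCompact (Icc 0 T ∩ {t | 0 ≤ h' t}) :=
      isCompact_Icc.inter_right (isClosed_le continuous_const hcont)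
    obtain ⟨x, ⟨hxT, hx⟩, hxmin⟩ := hK.exists_isLeast ⟨s, Ico_subset_Icc_self hs, hs'.le⟩
    have hxs : x ≤ s := hxmin ⟨Ico_subset_Icc_self hs, hs'.le⟩
    have hneg : ∀ t ∈ Ico 0 x, h' t ≤ 0 := fun t ht => by
      by_contra! ht'
      exact (ht.2.trans_le (hxmin ⟨⟨ht.1, ht.2.le.trans hxT.2⟩, ht'.le⟩)).false
    have hx' : 0 ≤ h' x := hx
    linarith [slope x hneg x ⟨hxT.1, le_rfl⟩, mul_lt_mul_of_pos_left (hxs.trans_lt hs.2) hM]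
  have hparab : h T ≤ h 0 + h' 0 * T + M * T ^ 2 / 2 :=
    image_le_of_hasDerivAt_le (B := fun t => h 0 + h' 0 * t + M * t ^ 2 / 2) hh
      (fun t => ((((hasDerivAt_id' t).const_mul (h' 0)).const_add (h 0)).add
        (((hasDerivAt_pow 2 t).const_mul M).div_const 2)).congr_deriv (by norm_num; ring))
      (by simp) (fun t ht => slope T hdecr t (Ico_subset_Icc_self ht)) T ⟨hT, le_rfl⟩
  have hval : h' 0 * T + M * T ^ 2 / 2 = -(h' 0 ^ 2 / (2 * M)) := by
    simp only [T]; field_simp; ring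
  have hmin : h' 0 ^ 2 / (2 * M) ≤ h 0 := by linarith [hnn T]
  rwa [div_le_iff₀ (by positivity), mul_comm] at hmin

section SelfBounding

variable {ρ1 : ℝ → ℝ}

theorem intervalIntegrable_one_div_of_pos (hρ1cont : ContinuousOn ρ1 (Ici 0))
    (hρ1pos : ∀ x ∈ Ici (0 : ℝ), 0 < ρ1 x) {a b : ℝ} (ha : 0 ≤ a) (hb : 0 ≤ b) :
    IntervalIntegrable (fun v => 1 / ρ1 v) MeasureTheory.volume a b := by
  have hsub : uIcc a b ⊆ Ici 0 := fun x hx => (le_min ha hb).trans hx.1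
  exact ((continuousOn_const.div (hρ1cont.mono hsub)) fun v hv =>
    (hρ1pos v (hsub hv)).ne').intervalIntegrable

theorem sbTheta_strictMonoOn (hρ1cont : ContinuousOn ρ1 (Ici 0))
    (hρ1pos : ∀ x ∈ Ici (0 : ℝ), 0 < ρ1 x) : StrictMonoOn (sbTheta ρ1) (Ici 0) := by
  intro a ha b hb hab
  have hdiff : sbTheta ρ1 b - sbTheta ρ1 a = ∫ v in a..b, 1 / ρ1 v :=
    intervalIntegral.integral_interval_sub_left
      (intervalIntegrable_one_div_of_pos hρ1cont hρ1pos le_rfl hb)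
      (intervalIntegrable_one_div_of_pos hρ1cont hρ1pos le_rfl ha)
  have hpos : 0 < ∫ v in a..b, 1 / ρ1 v :=
    intervalIntegral.intervalIntegral_pos_of_pos_on
      (intervalIntegrable_one_div_of_pos hρ1cont hρ1pos ha hb)
      (fun v hv => one_div_pos.2 (hρ1pos v (ha.trans hv.1.le))) hab
  linarith

theorem sbTheta_nonneg (hρ1cont : ContinuousOn ρ1 (Ici 0))
    (hρ1pos : ∀ x ∈ Ici (0 : ℝ), 0 < ρ1 x) {x : ℝ} (hx : 0 ≤ x) : 0 ≤ sbTheta ρ1 x := by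
  simpa [sbTheta] using
    (sbTheta_strictMonoOn hρ1cont hρ1pos).monotoneOn (mem_Ici.2 le_rfl) (mem_Ici.2 hx) hx

theorem div_le_sbTheta (hρ1mono : MonotoneOn ρ1 (Ici 0)) (hρ1cont : ContinuousOn ρ1 (Ici 0))
    (hρ1pos : ∀ x ∈ Ici (0 : ℝ), 0 < ρ1 x) {x : ℝ} (hx : 0 ≤ x) : x / ρ1 x ≤ sbTheta ρ1 x :=
  calc x / ρ1 x = ∫ _ in (0 : ℝ)..x, 1 / ρ1 x := by simp [div_eq_mul_inv, mul_comm]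
    _ ≤ sbTheta ρ1 x :=
      intervalIntegral.integral_mono_on hx intervalIntegrable_const
        (intervalIntegrable_one_div_of_pos hρ1cont hρ1pos le_rfl hx) fun v hv =>
          one_div_le_one_div_of_le (hρ1pos v hv.1) (hρ1mono hv.1 hx hv.2)

theorem sbRho0_strictMonoOn (hρ1mono : MonotoneOn ρ1 (Ici 0))
    (hρ1cont : ContinuousOn ρ1 (Ici 0)) (hρ1pos : ∀ x ∈ Ici (0 : ℝ), 0 < ρ1 x) :
    StrictMonoOn (sbRho0 ρ1) (Ici 0) := fun a ha b hb hab =>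
  mul_lt_mul' (hρ1mono ha hb hab.le)
    (Real.sqrt_lt_sqrt (by linarith [sbTheta_nonneg hρ1cont hρ1pos ha])
      (by linarith [sbTheta_strictMonoOn hρ1cont hρ1pos ha hb hab]))
    (Real.sqrt_nonneg _) (hρ1pos b hb)

theorem sqrt_two_mul_mul_le_sbRho0 (hρ1mono : MonotoneOn ρ1 (Ici 0))
    (hρ1cont : ContinuousOn ρ1 (Ici 0)) (hρ1pos : ∀ x ∈ Ici (0 : ℝ), 0 < ρ1 x) {x : ℝ}
    (hx : 0 ≤ x) : Real.sqrt (2 * ρ1 x * x) ≤ sbRho0 ρ1 x := by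
  have hρ : 0 < ρ1 x := hρ1pos x hx
  have hθ := div_le_sbTheta hρ1mono hρ1cont hρ1pos hx
  rw [sbRho0, Real.sqrt_le_left (mul_nonneg hρ.le (Real.sqrt_nonneg _)), mul_pow,
    Real.sq_sqrt (by linarith [div_nonneg hx hρ.le])]
  calc 2 * ρ1 x * x = ρ1 x ^ 2 * (2 * (x / ρ1 x)) := by field_simp
    _ ≤ ρ1 x ^ 2 * (2 * sbTheta ρ1 x) := by gcongr

end SelfBounding

section NormedSpace

variable {E G : Type*} [NormedAddCommGroup E] [NormedSpace ℝ E]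
  [NormedAddCommGroup G] [NormedSpace ℝ G]

theorem hasDerivAt_comp_add_smul {f : E → G} (hf : Differentiable ℝ f) (w v : E) (s : ℝ) :
    HasDerivAt (fun s : ℝ => f (w + s • v)) (fderiv ℝ f (w + s • v) v) s := by
  have hline := ((hasDerivAt_id s).smul_const v).const_add w
  exact ((hf _).hasFDerivAt.comp_hasDerivAt s hline).congr_deriv (by simp)

theorem sq_fderiv_apply_le_of_nonpos {F : E → ℝ} {ρ : ℝ → ℝ} (hF : Differentiable ℝ F)
    (hF' : Differentiable ℝ (fderiv ℝ F)) (hFnn : ∀ w, 0 ≤ F w)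
    (hρmono : MonotoneOn ρ (Ici 0)) (hρpos : ∀ x ∈ Ici (0 : ℝ), 0 < ρ x)
    (hbound : ∀ w, ‖fderiv ℝ (fderiv ℝ F) w‖ ≤ ρ (F w)) (w v : E)
    (hv : fderiv ℝ F w v ≤ 0) :
    fderiv ℝ F w v ^ 2 ≤ 2 * (ρ (F w) * ‖v‖ ^ 2) * F w := by
  rcases eq_or_ne v 0 with rfl | hv0
  · simp
  have hM : 0 < ρ (F w) * ‖v‖ ^ 2 := mul_pos (hρpos _ (hFnn w)) (by positivity)
  have key := sq_deriv_le_two_mul_of_nonneg hM (hasDerivAt_comp_add_smul hF w v)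
    (h'' := fun s => fderiv ℝ (fderiv ℝ F) (w + s • v) v v)
    (fun s => by simpa using (hasDerivAt_comp_add_smul hF' w v s).clm_apply (hasDerivAt_const s v))
    (fun s => hFnn _) ?_ (by simpa using hv)
  · simpa using key
  intro s hs
  simp only [zero_smul, add_zero] at hs
  calc fderiv ℝ (fderiv ℝ F) (w + s • v) v v
      ≤ ‖fderiv ℝ (fderiv ℝ F) (w + s • v)‖ * ‖v‖ * ‖v‖ :=
        (Real.le_norm_self _).trans (ContinuousLinearMap.le_opNorm₂ _ _ _)
    _ ≤ ρ (F w) * ‖v‖ ^ 2 := by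
        rw [mul_assoc, ← sq]
        gcongr
        exact (hbound _).trans (hρmono (hFnn _) (hFnn w) hs)

theorem norm_fderiv_le_sqrt {F : E → ℝ} {ρ : ℝ → ℝ} (hF : Differentiable ℝ F)
    (hF' : Differentiable ℝ (fderiv ℝ F)) (hFnn : ∀ w, 0 ≤ F w)
    (hρmono : MonotoneOn ρ (Ici 0)) (hρpos : ∀ x ∈ Ici (0 : ℝ), 0 < ρ x)
    (hbound : ∀ w, ‖fderiv ℝ (fderiv ℝ F) w‖ ≤ ρ (F w)) (w : E) :
    ‖fderiv ℝ F w‖ ≤ Real.sqrt (2 * ρ (F w) * F w) := by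
  refine ContinuousLinearMap.opNorm_le_bound _ (Real.sqrt_nonneg _) fun v => ?_
  have hsq : fderiv ℝ F w v ^ 2 ≤ 2 * (ρ (F w) * ‖v‖ ^ 2) * F w := by
    rcases le_total (fderiv ℝ F w v) 0 with hv | hv
    · exact sq_fderiv_apply_le_of_nonpos hF hF' hFnn hρmono hρpos hbound w v hv
    · simpa using sq_fderiv_apply_le_of_nonpos hF hF' hFnn hρmono hρpos hbound w (-v)
        (by simpa using hv)
  rw [← Real.sqrt_sq (norm_nonneg v), ← Real.sqrt_mul (by positivity [hρpos _ (hFnn w), hFnn w]),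
    Real.norm_eq_abs]
  exact Real.abs_le_sqrt (by linarith)

theorem le_add_one_of_norm_sub_le {F : E → ℝ} {φ : ℝ → ℝ} {C : ℝ} (hF : Differentiable ℝ F)
    (hgrad : ∀ w, ‖fderiv ℝ F w‖ ≤ φ (F w)) (hφ : StrictMonoOn φ (Icc C (C + 1))) {w u : E}
    (hw : F w ≤ C) (hu : ‖u - w‖ ≤ 1 / φ (C + 1)) : F u ≤ C + 1 := by
  rcases eq_or_ne u w with rfl | huw
  · linarith
  have hr : 0 < ‖u - w‖ := norm_pos_iff.2 (sub_ne_zero.2 huw)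
  have hφ1 : 0 < φ (C + 1) := one_div_pos.1 (hr.trans_le hu)
  -- At a contact point with the barrier `t ↦ C + t`, the gradient bound makes `F` grow slower.
  have key := image_le_of_deriv_right_lt_deriv_boundary (a := 0) (b := 1)
    (fun t _ => (hasDerivAt_comp_add_smul hF w (u - w) t).continuousAt.continuousWithinAt)
    (fun t _ => (hasDerivAt_comp_add_smul hF w (u - w) t).hasDerivWithinAt)
    (B := fun t => C + t) (by simpa using hw)
    (fun t => by simpa using (hasDerivAt_id t).const_add C) ?_ ⟨zero_le_one, le_rfl⟩
  · simpa using key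
  intro t ht hcontact
  calc fderiv ℝ F (w + t • (u - w)) (u - w)
      ≤ ‖fderiv ℝ F (w + t • (u - w))‖ * ‖u - w‖ :=
        (Real.le_norm_self _).trans (ContinuousLinearMap.le_opNorm _ _)
    _ ≤ φ (C + t) * ‖u - w‖ := by
        gcongr
        exact hcontact ▸ hgrad _
    _ < φ (C + 1) * ‖u - w‖ := by
        gcongr
        exact hφ ⟨by linarith [ht.1], by linarith [ht.2]⟩ ⟨by linarith, le_rfl⟩ (by linarith [ht.2])
    _ ≤ 1 := (le_div_iff₀' hφ1).1 hu

end NormedSpace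

theorem local_smoothness_bound_of_selfbounding_general (d : ℕ)
    (F : EuclideanSpace ℝ (Fin d) → ℝ)
    (hF : ContDiff ℝ 2 F) (hFnn : ∀ w, 0 ≤ F w)
    (ρ1 : ℝ → ℝ) (hρ1mono : MonotoneOn ρ1 (Set.Ici 0))
    (hρ1cont : ContinuousOn ρ1 (Set.Ici 0))
    (hρ1pos : ∀ x ∈ Set.Ici (0 : ℝ), 0 < ρ1 x)
    (hbound : ∀ w, ‖fderiv ℝ (fderiv ℝ F) w‖ ≤ ρ1 (F w))
    (w0 : EuclideanSpace ℝ (Fin d)) (L1w0 : ℝ)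
    (hL1w0 : L1w0 = max (max 1 (sbRho0 ρ1 (F w0 + 1)))
      (max (sbRho0 ρ1 (F w0) * sbRho0 ρ1 (F w0 + 1)) (ρ1 (F w0 + 1)))) :
    ∀ w : EuclideanSpace ℝ (Fin d), F w ≤ F w0 →
      ∀ u : EuclideanSpace ℝ (Fin d), ‖u - w‖ ≤ 1 / sbRho0 ρ1 (F w0 + 1) →
        ‖fderiv ℝ (fderiv ℝ F) u‖ ≤ L1w0 := by
  intro w hw u hu
  have hF1 : Differentiable ℝ F := hF.differentiable two_ne_zero
  have hF2 : Differentiable ℝ (fderiv ℝ F) := (hF.fderiv_right le_rfl).differentiable one_ne_zero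
  have hgrad (v : EuclideanSpace ℝ (Fin d)) : ‖fderiv ℝ F v‖ ≤ sbRho0 ρ1 (F v) :=
    (norm_fderiv_le_sqrt hF1 hF2 hFnn hρ1mono hρ1pos hbound v).trans
      (sqrt_two_mul_mul_le_sbRho0 hρ1mono hρ1cont hρ1pos (hFnn v))
  have hFu : F u ≤ F w0 + 1 := le_add_one_of_norm_sub_le hF1 hgrad
    ((sbRho0_strictMonoOn hρ1mono hρ1cont hρ1pos).mono fun x hx => (hFnn w0).trans hx.1) hw hu
  calc ‖fderiv ℝ (fderiv ℝ F) u‖ ≤ ρ1 (F u) := hbound u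
    _ ≤ ρ1 (F w0 + 1) := hρ1mono (hFnn u) (mem_Ici.2 (by linarith [hFnn w0])) hFu
    _ ≤ L1w0 := hL1w0 ▸ le_max_of_le_right (le_max_right _ _)

/-- Under the second-order self-bounding assumption, for every `w` in the `F(w0)`-sublevel
set and every `u` with `‖u − w‖ ≤ 1/ρ0(F(w0)+1)`, one has `‖∇²F(u)‖ ≤ L1(w0)`. -/
theorem local_smoothness_bound_of_selfbounding (d : ℕ) (hd : 1 ≤ d)
    (F : EuclideanSpace ℝ (Fin d) → ℝ)
    (hF : ContDiff ℝ 2 F) (hFnn : ∀ w, 0 ≤ F w)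
    (ρ1 : ℝ → ℝ) (hρ1mono : MonotoneOn ρ1 (Set.Ici 0))
    (hρ1cont : ContinuousOn ρ1 (Set.Ici 0))
    (hρ1pos : ∀ x ∈ Set.Ici (0 : ℝ), 0 < ρ1 x)
    (hbound : ∀ w, ‖fderiv ℝ (fderiv ℝ F) w‖ ≤ ρ1 (F w))
    (w0 : EuclideanSpace ℝ (Fin d)) (L1w0 : ℝ)
    (hL1w0 : L1w0 = max (max 1 (sbRho0 ρ1 (F w0 + 1)))
      (max (sbRho0 ρ1 (F w0) * sbRho0 ρ1 (F w0 + 1)) (ρ1 (F w0 + 1)))) :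
    ∀ w : EuclideanSpace ℝ (Fin d), F w ≤ F w0 →
      ∀ u : EuclideanSpace ℝ (Fin d), ‖u - w‖ ≤ 1 / sbRho0 ρ1 (F w0 + 1) →
        ‖fderiv ℝ (fderiv ℝ F) u‖ ≤ L1w0 :=
  local_smoothness_bound_of_selfbounding_general d F hF hFnn ρ1 hρ1mono hρ1cont hρ1pos hbound w0
    L1w0 hL1w0
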